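/- (Ehrenfeucht–Fraïssé game for hornALC_∇.) For any finite vocabulary τ, any τ-structures 𝔄, 𝔅 with a ∈ dom(𝔄), b ∈ dom(𝔅), and any natural number ℓ: 𝔄,a ≤^ℓ_{hornALC_∇} 𝔅,b if and only if 𝔄,{a} ⪯^ℓ_{horn_∇} 𝔅,b. Moreover, if 𝔄 and 𝔅 are finite, then 𝔄,a ≤_{hornALC_∇} 𝔅,b if and only if 𝔄,{a} ⪯_{horn_∇} 𝔅,b. -/

import Mathlib

/-!
Soundness of `⪯^ℓ_{horn_∇}` is an induction on hornALC_∇-concepts. For completeness, over a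
finite vocabulary there are only finitely many depth-`n` modal types (the concept names of an
element together with, per role, the set of types of its successors); concepts of depth `≤ n`
cannot separate elements of the same type, and every type `t` has a characteristic
ELU_∇-concept `χₜ` defining the elements that `n`-round ∇-simulate an element of type `t`.
If the forth move fails for every `R`-successor `b'` of `b`, the separating Horn concepts `Gₜ`,
one per type, combine into the single concept `∃R.⨅ₜ (χₜ → Gₜ)` that holds on `X` but not at
`b`; if the back move fails at `b'`, then `∀R.(χ_{type b'} → G)` separates. For finite
structures the `ℓ`-round relations for all `ℓ` give a Horn_∇ simulation, since by pigeonhole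
some response is good in infinitely many, hence all, rounds.
-/

/-- A τ-structure over domain `D`, for a vocabulary with concept names `Con`
(unary predicates) and role names `Rol` (binary predicates). -/
structure Str (Con Rol : Type) (D : Type) where
  conI : Con → Set D
  rolI : Rol → Set (D × D)

/-- ALC-concepts over the vocabulary `(Con, Rol)`. -/
inductive ALC (Con Rol : Type) where
  | top : ALC Con Rol
  | bot : ALC Con Rol
  | atomic : Con → ALC Con Rol
  | neg : ALC Con Rol → ALC Con Rol
  | disj : ALC Con Rol → ALC Con Rol → ALC Con Rol
  | conj : ALC Con Rol → ALC Con Rol → ALC Con Rol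
  | impl : ALC Con Rol → ALC Con Rol → ALC Con Rol
  | ex : Rol → ALC Con Rol → ALC Con Rol
  | all : Rol → ALC Con Rol → ALC Con Rol

variable {Con Rol D D1 D2 : Type}

/-- The extension `C^𝔄` of an ALC-concept in a structure. -/
def ALC.sem (M : Str Con Rol D) : ALC Con Rol → Set D
  | .top => Set.univ
  | .bot => ∅
  | .atomic A => M.conI A
  | .neg C => (C.sem M)ᶜ
  | .disj C C' => C.sem M ∪ C'.sem M
  | .conj C C' => C.sem M ∩ C'.sem M
  | .impl C C' => (C.sem M)ᶜ ∪ C'.sem M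
  | .ex R C => {a | ∃ b, (a, b) ∈ M.rolI R ∧ b ∈ C.sem M}
  | .all R C => {a | ∀ b, (a, b) ∈ M.rolI R → b ∈ C.sem M}

/-- The depth of an ALC-concept: maximal nesting of `∃R` and `∀R`. -/
def ALC.depth : ALC Con Rol → ℕ
  | .top | .bot | .atomic _ => 0
  | .neg C => C.depth
  | .disj C C' | .conj C C' | .impl C C' => max C.depth C'.depth
  | .ex _ C | .all _ C => C.depth + 1

/-- ELU-concepts: built from concept names and ⊤ using ⊓, ⊔ and ∃R only. -/
inductive ALC.IsELU : ALC Con Rol → Prop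
  | top : IsELU .top
  | atomic (A : Con) : IsELU (.atomic A)
  | conj {C C' : ALC Con Rol} : IsELU C → IsELU C' → IsELU (.conj C C')
  | disj {C C' : ALC Con Rol} : IsELU C → IsELU C' → IsELU (.disj C C')
  | ex (R : Rol) {C : ALC Con Rol} : IsELU C → IsELU (.ex R C)

/-- hornALC-concepts: `H ::= ⊥ | ⊤ | A | H⊓H' | L→H | ∃R.H | ∀R.H` with `L` an ELU-concept. -/
inductive ALC.IsHorn : ALC Con Rol → Prop
  | bot : IsHorn .bot
  | top : IsHorn .top
  | atomic (A : Con) : IsHorn (.atomic A)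
  | conj {H H' : ALC Con Rol} : IsHorn H → IsHorn H' → IsHorn (.conj H H')
  | impl {L H : ALC Con Rol} : IsELU L → IsHorn H → IsHorn (.impl L H)
  | ex (R : Rol) {H : ALC Con Rol} : IsHorn H → IsHorn (.ex R H)
  | all (R : Rol) {H : ALC Con Rol} : IsHorn H → IsHorn (.all R H)

/-- `S` is a simulation between `M` and `N`. -/
def IsSim (M : Str Con Rol D1) (N : Str Con Rol D2) (S : Set (D1 × D2)) : Prop :=
  ∀ a b, (a, b) ∈ S →
    (∀ A, a ∈ M.conI A → b ∈ N.conI A) ∧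
    (∀ R a', (a, a') ∈ M.rolI R → ∃ b', (b, b') ∈ N.rolI R ∧ (a', b') ∈ S)

/-- `𝔄,a ⪯_sim 𝔅,b`: some simulation contains `(a,b)`. -/
def Sim (M : Str Con Rol D1) (N : Str Con Rol D2) (a : D1) (b : D2) : Prop :=
  ∃ S, IsSim M N S ∧ (a, b) ∈ S

/-- The ℓ-round simulation relations `⪯^ℓ_sim`. -/
def SimL (M : Str Con Rol D1) (N : Str Con Rol D2) : ℕ → D1 → D2 → Prop
  | 0 => fun a b => ∀ A, a ∈ M.conI A → b ∈ N.conI A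
  | ℓ + 1 => fun a b =>
      (∀ A, a ∈ M.conI A → b ∈ N.conI A) ∧
      ∀ R a', (a, a') ∈ M.rolI R → ∃ b', (b, b') ∈ N.rolI R ∧ SimL M N ℓ a' b'

/-- `X R↑ Y`. -/
def relUp (R : Set (D1 × D1)) (X Y : Set D1) : Prop := ∀ a ∈ X, ∃ b ∈ Y, (a, b) ∈ R

/-- `X R↓ Y`. -/
def relDown (R : Set (D1 × D1)) (X Y : Set D1) : Prop := ∀ b ∈ Y, ∃ a ∈ X, (a, b) ∈ R

/-- `Z` is a Horn simulation between `M` and `N`. -/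
def IsHornSim (M : Str Con Rol D1) (N : Str Con Rol D2) (Z : Set (Set D1 × D2)) : Prop :=
  ∀ X b, (X, b) ∈ Z →
    X.Nonempty ∧
    (∀ A, X ⊆ M.conI A → b ∈ N.conI A) ∧
    (∀ R Y, relUp (M.rolI R) X Y →
        ∃ Y', Y' ⊆ Y ∧ ∃ b', (b, b') ∈ N.rolI R ∧ (Y', b') ∈ Z) ∧
    (∀ R b', (b, b') ∈ N.rolI R → ∃ Y, relDown (M.rolI R) X Y ∧ (Y, b') ∈ Z) ∧
    (∀ a ∈ X, Sim N M b a)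

/-- `𝔄,X ⪯_horn 𝔅,b`: some Horn simulation contains `(X,b)`. -/
def HornSim (M : Str Con Rol D1) (N : Str Con Rol D2) (X : Set D1) (b : D2) : Prop :=
  ∃ Z, IsHornSim M N Z ∧ (X, b) ∈ Z

/-- The ℓ-round Horn simulation relations `⪯^ℓ_horn`. -/
def HornSimL (M : Str Con Rol D1) (N : Str Con Rol D2) : ℕ → Set D1 → D2 → Prop
  | 0 => fun X b =>
      X.Nonempty ∧ (∀ A, X ⊆ M.conI A → b ∈ N.conI A) ∧ ∀ a ∈ X, SimL N M 0 b a
  | ℓ + 1 => fun X b =>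
      (X.Nonempty ∧ (∀ A, X ⊆ M.conI A → b ∈ N.conI A) ∧ ∀ a ∈ X, SimL N M 0 b a) ∧
      (∀ R Y, relUp (M.rolI R) X Y →
          ∃ Y', Y' ⊆ Y ∧ ∃ b', (b, b') ∈ N.rolI R ∧ HornSimL M N ℓ Y' b') ∧
      (∀ R b', (b, b') ∈ N.rolI R → ∃ Y, relDown (M.rolI R) X Y ∧ HornSimL M N ℓ Y b') ∧
      (∀ a ∈ X, SimL N M (ℓ + 1) b a)

/-- `𝔄,X ≤^ℓ_hornALC 𝔅,b`. -/
def leHornDepth (M : Str Con Rol D1) (N : Str Con Rol D2) (ℓ : ℕ) (X : Set D1) (b : D2) : Prop :=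
  ∀ C : ALC Con Rol, C.IsHorn → C.depth ≤ ℓ → X ⊆ C.sem M → b ∈ C.sem N

/-- `𝔄,X ≤_hornALC 𝔅,b`. -/
def leHorn (M : Str Con Rol D1) (N : Str Con Rol D2) (X : Set D1) (b : D2) : Prop :=
  ∀ C : ALC Con Rol, C.IsHorn → X ⊆ C.sem M → b ∈ C.sem N

/-- `𝔄,a ≤^ℓ_ELU 𝔅,b`. -/
def leELUDepth (M : Str Con Rol D1) (N : Str Con Rol D2) (ℓ : ℕ) (a : D1) (b : D2) : Prop :=
  ∀ C : ALC Con Rol, C.IsELU → C.depth ≤ ℓ → a ∈ C.sem M → b ∈ C.sem N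

/-- `𝔄,a ≤_ELU 𝔅,b`. -/
def leELU (M : Str Con Rol D1) (N : Str Con Rol D2) (a : D1) (b : D2) : Prop :=
  ∀ C : ALC Con Rol, C.IsELU → a ∈ C.sem M → b ∈ C.sem N

/-- ELU_∇-concepts: built from concept names and ⊤ using ⊓, ⊔, ∃R and
`∇R.C = ∃R.⊤ ⊓ ∀R.C`. -/
inductive ALC.IsELUNabla : ALC Con Rol → Prop
  | top : IsELUNabla .top
  | atomic (A : Con) : IsELUNabla (.atomic A)
  | conj {C C' : ALC Con Rol} : IsELUNabla C → IsELUNabla C' → IsELUNabla (.conj C C')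
  | disj {C C' : ALC Con Rol} : IsELUNabla C → IsELUNabla C' → IsELUNabla (.disj C C')
  | ex (R : Rol) {C : ALC Con Rol} : IsELUNabla C → IsELUNabla (.ex R C)
  | nabla (R : Rol) {C : ALC Con Rol} :
      IsELUNabla C → IsELUNabla (.conj (.ex R .top) (.all R C))

/-- hornALC_∇-concepts: like hornALC-concepts, but with ELU_∇-concepts on the left of →. -/
inductive ALC.IsHornNabla : ALC Con Rol → Prop
  | bot : IsHornNabla .bot
  | top : IsHornNabla .top
  | atomic (A : Con) : IsHornNabla (.atomic A)
  | conj {H H' : ALC Con Rol} : IsHornNabla H → IsHornNabla H' → IsHornNabla (.conj H H')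
  | impl {L H : ALC Con Rol} : IsELUNabla L → IsHornNabla H → IsHornNabla (.impl L H)
  | ex (R : Rol) {H : ALC Con Rol} : IsHornNabla H → IsHornNabla (.ex R H)
  | all (R : Rol) {H : ALC Con Rol} : IsHornNabla H → IsHornNabla (.all R H)

/-- `Z` is an ELU_∇-simulation between `M` and `N`. -/
def IsNablaSim (M : Str Con Rol D1) (N : Str Con Rol D2) (Z : Set (D1 × D2)) : Prop :=
  ∀ a b, (a, b) ∈ Z →
    (∀ A, a ∈ M.conI A → b ∈ N.conI A) ∧
    (∀ R a', (a, a') ∈ M.rolI R → ∃ b', (b, b') ∈ N.rolI R ∧ (a', b') ∈ Z) ∧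
    (∀ R b', (∃ a', (a, a') ∈ M.rolI R) → (b, b') ∈ N.rolI R →
      ∃ a', (a, a') ∈ M.rolI R ∧ (a', b') ∈ Z)

/-- `𝔄,a ⪯_∇ 𝔅,b`: some ELU_∇-simulation contains `(a,b)`. -/
def NablaSim (M : Str Con Rol D1) (N : Str Con Rol D2) (a : D1) (b : D2) : Prop :=
  ∃ Z, IsNablaSim M N Z ∧ (a, b) ∈ Z

/-- The ℓ-round ELU_∇-simulation relations `⪯^ℓ_∇`. -/
def NablaSimL (M : Str Con Rol D1) (N : Str Con Rol D2) : ℕ → D1 → D2 → Prop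
  | 0 => fun a b => ∀ A, a ∈ M.conI A → b ∈ N.conI A
  | ℓ + 1 => fun a b =>
      (∀ A, a ∈ M.conI A → b ∈ N.conI A) ∧
      (∀ R a', (a, a') ∈ M.rolI R → ∃ b', (b, b') ∈ N.rolI R ∧ NablaSimL M N ℓ a' b') ∧
      (∀ R b', (∃ a', (a, a') ∈ M.rolI R) → (b, b') ∈ N.rolI R →
        ∃ a', (a, a') ∈ M.rolI R ∧ NablaSimL M N ℓ a' b')

/-- `Z` is a Horn_∇ simulation between `M` and `N`: a Horn simulation whose simulation
condition uses ELU_∇-simulations. -/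
def IsHornNablaSim (M : Str Con Rol D1) (N : Str Con Rol D2) (Z : Set (Set D1 × D2)) :
    Prop :=
  ∀ X b, (X, b) ∈ Z →
    X.Nonempty ∧
    (∀ A, X ⊆ M.conI A → b ∈ N.conI A) ∧
    (∀ R Y, relUp (M.rolI R) X Y →
        ∃ Y', Y' ⊆ Y ∧ ∃ b', (b, b') ∈ N.rolI R ∧ (Y', b') ∈ Z) ∧
    (∀ R b', (b, b') ∈ N.rolI R → ∃ Y, relDown (M.rolI R) X Y ∧ (Y, b') ∈ Z) ∧
    (∀ a ∈ X, NablaSim N M b a)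

/-- `𝔄,X ⪯_{horn_∇} 𝔅,b`: some Horn_∇ simulation contains `(X,b)`. -/
def HornNablaSim (M : Str Con Rol D1) (N : Str Con Rol D2) (X : Set D1) (b : D2) : Prop :=
  ∃ Z, IsHornNablaSim M N Z ∧ (X, b) ∈ Z

/-- The ℓ-round Horn_∇ simulation relations `⪯^ℓ_{horn_∇}`. -/
def HornNablaSimL (M : Str Con Rol D1) (N : Str Con Rol D2) : ℕ → Set D1 → D2 → Prop
  | 0 => fun X b =>
      X.Nonempty ∧ (∀ A, X ⊆ M.conI A → b ∈ N.conI A) ∧ ∀ a ∈ X, NablaSimL N M 0 b a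
  | ℓ + 1 => fun X b =>
      (X.Nonempty ∧ (∀ A, X ⊆ M.conI A → b ∈ N.conI A) ∧ ∀ a ∈ X, NablaSimL N M 0 b a) ∧
      (∀ R Y, relUp (M.rolI R) X Y →
          ∃ Y', Y' ⊆ Y ∧ ∃ b', (b, b') ∈ N.rolI R ∧ HornNablaSimL M N ℓ Y' b') ∧
      (∀ R b', (b, b') ∈ N.rolI R → ∃ Y, relDown (M.rolI R) X Y ∧ HornNablaSimL M N ℓ Y b') ∧
      (∀ a ∈ X, NablaSimL N M (ℓ + 1) b a)

/-- `𝔄,a ≤^ℓ_{hornALC_∇} 𝔅,b`. -/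
def leHornNablaDepth (M : Str Con Rol D1) (N : Str Con Rol D2) (ℓ : ℕ) (a : D1) (b : D2) :
    Prop :=
  ∀ C : ALC Con Rol, C.IsHornNabla → C.depth ≤ ℓ → a ∈ C.sem M → b ∈ C.sem N

/-- `𝔄,a ≤_{hornALC_∇} 𝔅,b`. -/
def leHornNabla (M : Str Con Rol D1) (N : Str Con Rol D2) (a : D1) (b : D2) : Prop :=
  ∀ C : ALC Con Rol, C.IsHornNabla → a ∈ C.sem M → b ∈ C.sem N


theorem List.foldr_map_induction {α β : Type*} {p : β → Prop} {g : β → β → β} {c : β}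
    {f : α → β} (hg : ∀ x y, p x → p y → p (g x y)) (hc : p c) (hf : ∀ a, p (f a)) :
    ∀ l : List α, p ((l.map f).foldr g c)
  | [] => hc
  | a :: l => hg _ _ (hf a) (foldr_map_induction hg hc hf l)

namespace ALC

theorem mem_sem_impl {S : Str Con Rol D} {C C' : ALC Con Rol} {x : D} :
    x ∈ (impl C C').sem S ↔ (x ∈ C.sem S → x ∈ C'.sem S) := by
  simp only [sem, Set.mem_union, Set.mem_compl_iff, imp_iff_not_or]

section FiniteConnectives

variable {ι : Type} [Finite ι]

noncomputable def iConj (f : ι → ALC Con Rol) : ALC Con Rol :=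
  ((Finite.exists_univ_list ι).choose.map f).foldr conj top

/-- The extra summand `f i₀` stands in for `⊥`, which is not an ELU_∇-concept. -/
noncomputable def iDisj (f : ι → ALC Con Rol) (i₀ : ι) : ALC Con Rol :=
  ((Finite.exists_univ_list ι).choose.map f).foldr disj (f i₀)

theorem mem_sem_iConj {S : Str Con Rol D} {f : ι → ALC Con Rol} {x : D} :
    x ∈ (iConj f).sem S ↔ ∀ i, x ∈ (f i).sem S := by
  suffices ∀ l : List ι, x ∈ ((l.map f).foldr conj top).sem S ↔ ∀ i ∈ l, x ∈ (f i).sem S from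
    (this _).trans ⟨fun h i => h i ((Finite.exists_univ_list ι).choose_spec.2 i), fun h i _ => h i⟩
  intro l
  induction l with
  | nil => simp [sem]
  | cons i l ih => simp [sem, ih]

theorem mem_sem_iDisj {S : Str Con Rol D} {f : ι → ALC Con Rol} {i₀ : ι} {x : D} :
    x ∈ (iDisj f i₀).sem S ↔ ∃ i, x ∈ (f i).sem S := by
  suffices ∀ l : List ι, x ∈ ((l.map f).foldr disj (f i₀)).sem S ↔
      x ∈ (f i₀).sem S ∨ ∃ i ∈ l, x ∈ (f i).sem S from
    (this _).trans ⟨fun h => h.elim (⟨i₀, ·⟩) fun ⟨i, _, hi⟩ => ⟨i, hi⟩,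
      fun ⟨i, hi⟩ => .inr ⟨i, (Finite.exists_univ_list ι).choose_spec.2 i, hi⟩⟩
  intro l
  induction l with
  | nil => simp
  | cons i l ih => simp only [List.map_cons, List.foldr_cons, sem, Set.mem_union, ih]; grind

theorem depth_iConj_le {f : ι → ALC Con Rol} {n : ℕ} (h : ∀ i, (f i).depth ≤ n) :
    (iConj f).depth ≤ n :=
  List.foldr_map_induction (p := fun C : ALC Con Rol => C.depth ≤ n) (c := top)
    (fun _ _ => max_le) (Nat.zero_le n) h _

theorem depth_iDisj_le {f : ι → ALC Con Rol} {i₀ : ι} {n : ℕ} (h : ∀ i, (f i).depth ≤ n) :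
    (iDisj f i₀).depth ≤ n :=
  List.foldr_map_induction (p := fun C : ALC Con Rol => C.depth ≤ n) (fun _ _ => max_le) (h i₀) h _

theorem IsHornNabla.iConj {f : ι → ALC Con Rol} (h : ∀ i, (f i).IsHornNabla) :
    (iConj f).IsHornNabla :=
  List.foldr_map_induction (fun _ _ => .conj) .top h _

theorem IsELUNabla.iConj {f : ι → ALC Con Rol} (h : ∀ i, (f i).IsELUNabla) :
    (iConj f).IsELUNabla :=
  List.foldr_map_induction (fun _ _ => .conj) .top h _

theorem IsELUNabla.iDisj {f : ι → ALC Con Rol} {i₀ : ι} (h : ∀ i, (f i).IsELUNabla) :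
    (iDisj f i₀).IsELUNabla :=
  List.foldr_map_induction (fun _ _ => .disj) (h i₀) h _

end FiniteConnectives

end ALC

def Ty (Con Rol : Type) : ℕ → Type
  | 0 => Set Con
  | n + 1 => Set Con × (Rol → Set (Ty Con Rol n))

instance Ty.finite [Finite Con] [Finite Rol] : ∀ n, Finite (Ty Con Rol n)
  | 0 => inferInstanceAs (Finite (Set Con))
  | n + 1 =>
    have := Ty.finite n
    inferInstanceAs (Finite (Set Con × (Rol → Set (Ty Con Rol n))))

def Ty.atoms : {n : ℕ} → Ty Con Rol n → Set Con
  | 0, t => t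
  | _ + 1, t => t.1

def Str.type (S : Str Con Rol D) : (n : ℕ) → D → Ty Con Rol n
  | 0, x => {A | x ∈ S.conI A}
  | n + 1, x => ({A | x ∈ S.conI A}, fun R => {t | ∃ y, (x, y) ∈ S.rolI R ∧ S.type n y = t})

theorem Str.atoms_type (S : Str Con Rol D) (n : ℕ) (x : D) :
    (S.type n x).atoms = {A | x ∈ S.conI A} := by
  cases n <;> rfl

theorem Str.exists_succ_type_eq {S : Str Con Rol D1} {S' : Str Con Rol D2} {n : ℕ}
    {x : D1} {x' : D2} (h : S.type (n + 1) x = S'.type (n + 1) x') {R : Rol} {y : D1}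
    (hy : (x, y) ∈ S.rolI R) : ∃ y', (x', y') ∈ S'.rolI R ∧ S'.type n y' = S.type n y :=
  show S.type n y ∈ (S'.type (n + 1) x').2 R from h ▸ ⟨y, hy, rfl⟩

theorem ALC.mem_sem_iff_of_type_eq {C : ALC Con Rol} {S : Str Con Rol D1} {S' : Str Con Rol D2}
    {n : ℕ} (hC : C.depth ≤ n) {x : D1} {x' : D2} (h : S.type n x = S'.type n x') :
    x ∈ C.sem S ↔ x' ∈ C.sem S' := by
  induction C generalizing n x x' with
  | top | bot => simp [sem]
  | atomic A => simpa [sem, Str.atoms_type] using congrArg (A ∈ Ty.atoms ·) h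
  | neg C ih => simp [sem, ih hC h]
  | disj C C' ih ih' | conj C C' ih ih' | impl C C' ih ih' =>
    simp only [depth, max_le_iff] at hC
    simp [sem, ih hC.1 h, ih' hC.2 h]
  | ex R C ih =>
    obtain ⟨m, rfl⟩ : ∃ m, n = m + 1 := ⟨n - 1, by simp only [depth] at hC; omega⟩
    replace hC : C.depth ≤ m := by simp only [depth] at hC; omega
    constructor
    · rintro ⟨y, hy, hyC⟩
      obtain ⟨y', hy', hty⟩ := Str.exists_succ_type_eq h hy
      exact ⟨y', hy', (ih hC hty.symm).1 hyC⟩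
    · rintro ⟨y', hy', hyC⟩
      obtain ⟨y, hy, hty⟩ := Str.exists_succ_type_eq h.symm hy'
      exact ⟨y, hy, (ih hC hty).2 hyC⟩
  | all R C ih =>
    obtain ⟨m, rfl⟩ : ∃ m, n = m + 1 := ⟨n - 1, by simp only [depth] at hC; omega⟩
    replace hC : C.depth ≤ m := by simp only [depth] at hC; omega
    constructor
    · intro hall y' hy'
      obtain ⟨y, hy, hty⟩ := Str.exists_succ_type_eq h.symm hy'
      exact (ih hC hty).1 (hall y hy)
    · intro hall y hy
      obtain ⟨y', hy', hty⟩ := Str.exists_succ_type_eq h hy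
      exact (ih hC hty.symm).2 (hall y' hy')

namespace NablaSimL

variable {S : Str Con Rol D1} {S' : Str Con Rol D2}

theorem atom {n : ℕ} {x : D1} {y : D2} (h : NablaSimL S S' n x y) :
    ∀ A, x ∈ S.conI A → y ∈ S'.conI A := by
  cases n with
  | zero => exact h
  | succ n => exact h.1

theorem refl (S : Str Con Rol D) : ∀ n x, NablaSimL S S n x x
  | 0, _ => fun _ h => h
  | n + 1, _ =>
    ⟨fun _ h => h, fun _ y hy => ⟨y, hy, refl S n y⟩, fun _ y _ hy => ⟨y, hy, refl S n y⟩⟩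

theorem of_succ : ∀ {n : ℕ} {x : D1} {y : D2},
    NablaSimL S S' (n + 1) x y → NablaSimL S S' n x y
  | 0, _, _, h => h.1
  | _ + 1, _, _, ⟨hA, hforth, hback⟩ =>
    ⟨hA, fun R x' hx' => (hforth R x' hx').imp fun _ h => ⟨h.1, of_succ h.2⟩,
      fun R y' hex hy' => (hback R y' hex hy').imp fun _ h => ⟨h.1, of_succ h.2⟩⟩

theorem mem_sem {L : ALC Con Rol} (hL : L.IsELUNabla) {n : ℕ} {x : D1} {y : D2}
    (hd : L.depth ≤ n) (h : NablaSimL S S' n x y) (hx : x ∈ L.sem S) : y ∈ L.sem S' := by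
  induction hL generalizing n x y with
  | top => trivial
  | atomic A => exact h.atom A hx
  | conj _ _ ih ih' =>
    simp only [ALC.depth, max_le_iff] at hd
    exact ⟨ih hd.1 h hx.1, ih' hd.2 h hx.2⟩
  | disj _ _ ih ih' =>
    simp only [ALC.depth, max_le_iff] at hd
    exact hx.imp (ih hd.1 h) (ih' hd.2 h)
  | ex R _ ih =>
    obtain ⟨m, rfl⟩ : ∃ m, n = m + 1 := ⟨n - 1, by simp only [ALC.depth] at hd; omega⟩
    obtain ⟨x', hx', hx'C⟩ := hx
    obtain ⟨y', hy', h'⟩ := h.2.1 R x' hx'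
    exact ⟨y', hy', ih (by simpa [ALC.depth] using hd) h' hx'C⟩
  | nabla R _ ih =>
    obtain ⟨m, rfl⟩ : ∃ m, n = m + 1 := ⟨n - 1, by simp only [ALC.depth] at hd; omega⟩
    obtain ⟨⟨x₀, hx₀, -⟩, hall⟩ := hx
    obtain ⟨y₀, hy₀, -⟩ := h.2.1 R x₀ hx₀
    refine ⟨⟨y₀, hy₀, trivial⟩, fun y' hy' => ?_⟩
    obtain ⟨x', hx', h'⟩ := h.2.2 R y' ⟨x₀, hx₀⟩ hy'
    exact ih (by simp only [ALC.depth, max_le_iff] at hd; omega) h' (hall x' hx')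

end NablaSimL

def leHornNablaDepthSet (M : Str Con Rol D1) (N : Str Con Rol D2) (n : ℕ) (X : Set D1) (b : D2) :
    Prop :=
  ∀ C : ALC Con Rol, C.IsHornNabla → C.depth ≤ n → X ⊆ C.sem M → b ∈ C.sem N

namespace leHornNablaDepthSet

variable {M : Str Con Rol D1} {N : Str Con Rol D2} {n : ℕ} {X : Set D1} {b : D2}

theorem nonempty (h : leHornNablaDepthSet M N n X b) : X.Nonempty :=
  Set.nonempty_iff_ne_empty.2 fun hX => h .bot .bot (Nat.zero_le n) (by simp [hX])

theorem atom (h : leHornNablaDepthSet M N n X b) : ∀ A, X ⊆ M.conI A → b ∈ N.conI A :=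
  fun A => h (.atomic A) (.atomic A) (Nat.zero_le n)

end leHornNablaDepthSet

namespace HornNablaSimL

variable {M : Str Con Rol D1} {N : Str Con Rol D2}

theorem round_zero {n : ℕ} {X : Set D1} {b : D2} (h : HornNablaSimL M N n X b) :
    HornNablaSimL M N 0 X b := by
  cases n with
  | zero => exact h
  | succ n => exact h.1

theorem nonempty {n : ℕ} {X : Set D1} {b : D2} (h : HornNablaSimL M N n X b) : X.Nonempty :=
  h.round_zero.1

theorem atom {n : ℕ} {X : Set D1} {b : D2} (h : HornNablaSimL M N n X b) :
    ∀ A, X ⊆ M.conI A → b ∈ N.conI A :=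
  h.round_zero.2.1

theorem nablaSimL {n : ℕ} {X : Set D1} {b : D2} (h : HornNablaSimL M N n X b) :
    ∀ a ∈ X, NablaSimL N M n b a := by
  cases n with
  | zero => exact h.2.2
  | succ n => exact h.2.2.2

theorem of_succ : ∀ {n : ℕ} {X : Set D1} {b : D2},
    HornNablaSimL M N (n + 1) X b → HornNablaSimL M N n X b
  | 0, _, _, h => h.1
  | _ + 1, _, _, ⟨h₀, hforth, hback, hsim⟩ =>
    ⟨h₀, fun R Y hY => (hforth R Y hY).imp fun _ ⟨hsub, b', hb', h⟩ => ⟨hsub, b', hb', of_succ h⟩,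
      fun R b' hb' => (hback R b' hb').imp fun _ h => ⟨h.1, of_succ h.2⟩,
      fun a ha => (hsim a ha).of_succ⟩

theorem leHornNablaDepthSet {n : ℕ} {X : Set D1} {b : D2} (h : HornNablaSimL M N n X b) :
    leHornNablaDepthSet M N n X b := by
  intro C hC hd hX
  induction hC generalizing n X b with
  | bot => exact (hX h.nonempty.some_mem).elim
  | top => trivial
  | atomic A => exact h.atom A hX
  | conj _ _ ih ih' =>
    simp only [ALC.depth, max_le_iff] at hd
    exact ⟨ih h hd.1 fun a ha => (hX ha).1, ih' h hd.2 fun a ha => (hX ha).2⟩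
  | impl hL _ ih =>
    simp only [ALC.depth, max_le_iff] at hd
    exact ALC.mem_sem_impl.2 fun hb => ih h hd.2 fun a ha =>
      ALC.mem_sem_impl.1 (hX ha) ((h.nablaSimL a ha).mem_sem hL hd.1 hb)
  | ex R _ ih =>
    obtain ⟨m, rfl⟩ : ∃ m, n = m + 1 := ⟨n - 1, by simp only [ALC.depth] at hd; omega⟩
    obtain ⟨Y, hY, b', hb', h'⟩ :=
      h.2.1 R _ fun a ha => (hX ha).imp fun _ hy => ⟨hy.2, hy.1⟩
    exact ⟨b', hb', ih h' (by simpa [ALC.depth] using hd) hY⟩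
  | all R _ ih =>
    obtain ⟨m, rfl⟩ : ∃ m, n = m + 1 := ⟨n - 1, by simp only [ALC.depth] at hd; omega⟩
    intro b' hb'
    obtain ⟨Y, hY, h'⟩ := h.2.2.1 R b' hb'
    refine ih h' (by simpa [ALC.depth] using hd) fun y hy => ?_
    obtain ⟨a, ha, hay⟩ := hY y hy
    exact hX ha y hay

end HornNablaSimL

section FiniteVocabulary

variable [Finite Con] [Finite Rol]

/-- The conjunct `∇R.⨆ₛ χₛ` is repeated for every `R`-successor type `s`, which supplies the
base of the disjunction and drops the conjunct when there is no such `s`. -/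
noncomputable def charConcept : (n : ℕ) → Ty Con Rol n → ALC Con Rol
  | 0, t => .iConj fun A : t.atoms => .atomic A.1
  | n + 1, t => .conj (.iConj fun A : t.atoms => .atomic A.1)
      (.iConj fun R => .iConj fun s : t.2 R =>
        .conj (.ex R (charConcept n s))
          (.conj (.ex R .top) (.all R (.iDisj (fun s' : t.2 R => charConcept n s') s))))

theorem isELUNabla_charConcept : ∀ n (t : Ty Con Rol n), (charConcept n t).IsELUNabla
  | 0, _ => .iConj fun A => .atomic A.1
  | n + 1, _ => .conj (.iConj fun A => .atomic A.1) (.iConj fun R => .iConj fun _ =>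
      .conj (.ex R (isELUNabla_charConcept n _))
        (.nabla R (.iDisj fun _ => isELUNabla_charConcept n _)))

theorem depth_charConcept_le : ∀ n (t : Ty Con Rol n), (charConcept n t).depth ≤ n
  | 0, _ => ALC.depth_iConj_le fun _ => le_rfl
  | n + 1, _ => by
    have ih := depth_charConcept_le n
    simp only [charConcept, ALC.depth, max_le_iff]
    refine ⟨ALC.depth_iConj_le fun _ => by simp [ALC.depth], ALC.depth_iConj_le fun R =>
      ALC.depth_iConj_le fun s => ?_⟩
    simp [ALC.depth, ih, ALC.depth_iDisj_le]

theorem mem_sem_charConcept {S : Str Con Rol D1} {S' : Str Con Rol D2} :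
    ∀ {n : ℕ} {y : D1} {x : D2}, x ∈ (charConcept n (S.type n y)).sem S' ↔ NablaSimL S S' n y x
  | 0, y, x => by
    rw [charConcept, ALC.mem_sem_iConj]
    simp [Str.atoms_type, ALC.sem, NablaSimL]
  | n + 1, y, x => by
    simp only [charConcept, ALC.sem, Set.mem_inter_iff, ALC.mem_sem_iConj, ALC.mem_sem_iDisj]
    simp only [Str.type, Ty.atoms, Set.mem_ofPred_eq, Subtype.forall, Set.mem_univ, and_true,
      Subtype.exists, exists_prop, exists_exists_and_eq_and, mem_sem_charConcept,
      forall_exists_index, and_imp, forall_apply_eq_imp_iff₂, NablaSimL]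
    refine and_congr_right fun _ =>
      ⟨fun h => ⟨fun R y' hy' => (h R y' hy').1, fun R x' y₀ hy₀ hx' => (h R y₀ hy₀).2.2 x' hx'⟩,
        fun ⟨hforth, hback⟩ R y' hy' => ⟨hforth R y' hy', (hforth R y' hy').imp fun _ h => h.1,
          fun x' hx' => hback R x' y' hy' hx'⟩⟩

namespace leHornNablaDepthSet

variable {M : Str Con Rol D1} {N : Str Con Rol D2} {n : ℕ} {X : Set D1} {b : D2}

theorem exists_forth (h : leHornNablaDepthSet M N (n + 1) X b) {R : Rol} {Y : Set D1}
    (hY : relUp (M.rolI R) X Y) : ∃ b', (b, b') ∈ N.rolI R ∧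
      leHornNablaDepthSet M N n (Y ∩ (charConcept n (N.type n b')).sem M) b' := by
  by_contra! hbad
  have hG : ∀ t : Ty Con Rol n, ∃ G : ALC Con Rol, G.IsHornNabla ∧ G.depth ≤ n ∧
      Y ∩ (charConcept n t).sem M ⊆ G.sem M ∧
      ∀ b', (b, b') ∈ N.rolI R → N.type n b' = t → b' ∉ G.sem N := by
    intro t
    by_cases ht : ∃ b₀, (b, b₀) ∈ N.rolI R ∧ N.type n b₀ = t
    · obtain ⟨b₀, hb₀, rfl⟩ := ht
      obtain ⟨G, hG, hd, hsub, hb₀G⟩ : ∃ G : ALC Con Rol, G.IsHornNabla ∧ G.depth ≤ n ∧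
          Y ∩ (charConcept n (N.type n b₀)).sem M ⊆ G.sem M ∧ b₀ ∉ G.sem N := by
        simpa [leHornNablaDepthSet] using hbad b₀ hb₀
      exact ⟨G, hG, hd, hsub, fun b' _ hty => (ALC.mem_sem_iff_of_type_eq hd hty).not.2 hb₀G⟩
    · exact ⟨.top, .top, Nat.zero_le n, Set.subset_univ _,
        fun b' hb' hty => (ht ⟨b', hb', hty⟩).elim⟩
  choose G hG using hG
  let K : ALC Con Rol := .ex R (.iConj fun t => .impl (charConcept n t) (G t))
  have hK : K.IsHornNabla :=
    .ex R (.iConj fun t => .impl (isELUNabla_charConcept n t) (hG t).1)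
  have hKd : K.depth ≤ n + 1 :=
    Nat.succ_le_succ (ALC.depth_iConj_le fun t => max_le (depth_charConcept_le n t) (hG t).2.1)
  have hXK : X ⊆ K.sem M := by
    intro a ha
    obtain ⟨y, hyY, hay⟩ := hY a ha
    exact ⟨y, hay, ALC.mem_sem_iConj.2 fun t =>
      ALC.mem_sem_impl.2 fun hy => (hG t).2.2.1 ⟨hyY, hy⟩⟩
  obtain ⟨b', hb', hb'K⟩ := h K hK hKd hXK
  exact (hG _).2.2.2 b' hb' rfl <| ALC.mem_sem_impl.1 (ALC.mem_sem_iConj.1 hb'K (N.type n b'))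
    (mem_sem_charConcept.2 (NablaSimL.refl N n b'))

theorem exists_back (h : leHornNablaDepthSet M N (n + 1) X b) {R : Rol} {b' : D2}
    (hb' : (b, b') ∈ N.rolI R) : leHornNablaDepthSet M N n
      ({y | ∃ a ∈ X, (a, y) ∈ M.rolI R} ∩ (charConcept n (N.type n b')).sem M) b' := by
  intro C hC hd hYC
  let K : ALC Con Rol := .all R (.impl (charConcept n (N.type n b')) C)
  have hXK : X ⊆ K.sem M := fun a ha y hay =>
    ALC.mem_sem_impl.2 fun hy => hYC ⟨⟨a, ha, hay⟩, hy⟩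
  have hKd : K.depth ≤ n + 1 := Nat.succ_le_succ (max_le (depth_charConcept_le n _) hd)
  exact ALC.mem_sem_impl.1 (h K (.all R (.impl (isELUNabla_charConcept n _) hC)) hKd hXK b' hb')
    (mem_sem_charConcept.2 (NablaSimL.refl N n b'))

end leHornNablaDepthSet

theorem hornNablaSimL_of_leHornNablaDepthSet {M : Str Con Rol D1} {N : Str Con Rol D2} :
    ∀ {n : ℕ} {X : Set D1} {b : D2}, leHornNablaDepthSet M N n X b →
      (∀ a ∈ X, NablaSimL N M n b a) → HornNablaSimL M N n X b
  | 0, _, _, h, hsim => ⟨h.nonempty, h.atom, fun a ha => (hsim a ha).atom⟩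
  | n + 1, X, b, h, hsim => by
    refine ⟨⟨h.nonempty, h.atom, fun a ha => (hsim a ha).atom⟩, fun R Y hY => ?_,
      fun R b' hb' => ?_, hsim⟩
    · obtain ⟨b', hb', h'⟩ := h.exists_forth hY
      exact ⟨_, Set.inter_subset_left, b', hb', hornNablaSimL_of_leHornNablaDepthSet h'
        fun y hy => mem_sem_charConcept.1 hy.2⟩
    · exact ⟨_, fun y hy => hy.1, hornNablaSimL_of_leHornNablaDepthSet (h.exists_back hb')
        fun y hy => mem_sem_charConcept.1 hy.2⟩

theorem NablaSimL.of_leHornNablaDepth {M : Str Con Rol D1} {N : Str Con Rol D2} {n : ℕ}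
    {a : D1} {b : D2} (h : leHornNablaDepth M N n a b) : NablaSimL N M n b a := by
  rw [← mem_sem_charConcept]
  by_contra ha
  have hb := h (.impl (charConcept n (N.type n b)) .bot)
    (.impl (isELUNabla_charConcept n _) .bot) (max_le (depth_charConcept_le n _) (Nat.zero_le n))
    (ALC.mem_sem_impl.2 fun h' => (ha h').elim)
  exact ALC.mem_sem_impl.1 hb (mem_sem_charConcept.2 (NablaSimL.refl N n b))

theorem leHornNablaDepth_iff_hornNablaSimL {M : Str Con Rol D1} {N : Str Con Rol D2} {n : ℕ}
    {a : D1} {b : D2} : leHornNablaDepth M N n a b ↔ HornNablaSimL M N n {a} b :=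
  ⟨fun h => hornNablaSimL_of_leHornNablaDepthSet (fun C hC hd hX => h C hC hd (hX rfl))
      (by rintro _ rfl; exact NablaSimL.of_leHornNablaDepth h),
    fun h C hC hd ha => h.leHornNablaDepthSet C hC hd (Set.singleton_subset_iff.2 ha)⟩

end FiniteVocabulary

theorem Finite.exists_forall_of_antitone {α : Type*} [Finite α] {P : ℕ → α → Prop}
    (hP : ∀ n a, P (n + 1) a → P n a) (h : ∀ n, ∃ a, P n a) : ∃ a, ∀ n, P n a := by
  choose f hf using h
  obtain ⟨a, ha⟩ := Finite.exists_infinite_fiber f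
  have hanti : Antitone fun n => {a | P n a} := antitone_nat_of_succ_le fun n a => hP n a
  refine ⟨a, fun n => ?_⟩
  obtain ⟨m, hm, hnm⟩ := (Set.infinite_coe_iff.1 ha).exists_gt n
  exact hanti hnm.le (show P m a from hm ▸ hf m)

namespace NablaSim

variable {S : Str Con Rol D1} {S' : Str Con Rol D2}

theorem nablaSimL {x : D1} {y : D2} (h : NablaSim S S' x y) (n : ℕ) : NablaSimL S S' n x y := by
  obtain ⟨Z, hZ, hxy⟩ := h
  induction n generalizing x y with
  | zero => exact (hZ x y hxy).1
  | succ n ih =>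
    obtain ⟨hA, hforth, hback⟩ := hZ x y hxy
    exact ⟨hA, fun R x' hx' => (hforth R x' hx').imp fun _ h => ⟨h.1, ih h.2⟩,
      fun R y' hex hy' => (hback R y' hex hy').imp fun _ h => ⟨h.1, ih h.2⟩⟩

theorem of_forall_nablaSimL [Finite D1] [Finite D2] {x : D1} {y : D2}
    (h : ∀ n, NablaSimL S S' n x y) : NablaSim S S' x y := by
  refine ⟨{p | ∀ n, NablaSimL S S' n p.1 p.2}, fun x y hxy => ⟨hxy 0, fun R x' hx' => ?_,
    fun R y' hex hy' => ?_⟩, h⟩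
  · obtain ⟨y', hy'⟩ := Finite.exists_forall_of_antitone
      (P := fun n y' => (y, y') ∈ S'.rolI R ∧ NablaSimL S S' n x' y')
      (fun _ _ h => ⟨h.1, h.2.of_succ⟩) fun n => (hxy (n + 1)).2.1 R x' hx'
    exact ⟨y', (hy' 0).1, fun n => (hy' n).2⟩
  · obtain ⟨x', hx'⟩ := Finite.exists_forall_of_antitone
      (P := fun n x' => (x, x') ∈ S.rolI R ∧ NablaSimL S S' n x' y')
      (fun _ _ h => ⟨h.1, h.2.of_succ⟩) fun n => (hxy (n + 1)).2.2 R y' hex hy'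
    exact ⟨x', (hx' 0).1, fun n => (hx' n).2⟩

end NablaSim

namespace HornNablaSim

variable {M : Str Con Rol D1} {N : Str Con Rol D2}

theorem hornNablaSimL {X : Set D1} {b : D2} (h : HornNablaSim M N X b) (n : ℕ) :
    HornNablaSimL M N n X b := by
  obtain ⟨Z, hZ, hXb⟩ := h
  induction n generalizing X b with
  | zero =>
    obtain ⟨hne, hA, -, -, hsim⟩ := hZ X b hXb
    exact ⟨hne, hA, fun a ha => (hsim a ha).nablaSimL 0⟩
  | succ n ih =>
    obtain ⟨hne, hA, hforth, hback, hsim⟩ := hZ X b hXb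
    exact ⟨⟨hne, hA, fun a ha => (hsim a ha).nablaSimL 0⟩,
      fun R Y hY => (hforth R Y hY).imp fun _ ⟨hsub, b', hb', h⟩ => ⟨hsub, b', hb', ih h⟩,
      fun R b' hb' => (hback R b' hb').imp fun _ h => ⟨h.1, ih h.2⟩,
      fun a ha => (hsim a ha).nablaSimL (n + 1)⟩

theorem of_forall_hornNablaSimL [Finite D1] [Finite D2] {X : Set D1} {b : D2}
    (h : ∀ n, HornNablaSimL M N n X b) : HornNablaSim M N X b := by
  refine ⟨{p | ∀ n, HornNablaSimL M N n p.1 p.2}, fun X b hXb => ⟨(hXb 0).nonempty,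
    (hXb 0).atom, fun R Y hY => ?_, fun R b' hb' => ?_,
    fun a ha => .of_forall_nablaSimL fun n => (hXb n).nablaSimL a ha⟩, h⟩
  · obtain ⟨⟨Y', b'⟩, hY'⟩ := Finite.exists_forall_of_antitone
      (P := fun n (p : Set D1 × D2) =>
        p.1 ⊆ Y ∧ (b, p.2) ∈ N.rolI R ∧ HornNablaSimL M N n p.1 p.2)
      (fun _ _ h => ⟨h.1, h.2.1, h.2.2.of_succ⟩)
      fun n => let ⟨Y', hY', b', hb', h⟩ := (hXb (n + 1)).2.1 R Y hY; ⟨(Y', b'), hY', hb', h⟩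
    exact ⟨Y', (hY' 0).1, b', (hY' 0).2.1, fun n => (hY' n).2.2⟩
  · obtain ⟨Y, hY⟩ := Finite.exists_forall_of_antitone
      (P := fun n Y => relDown (M.rolI R) X Y ∧ HornNablaSimL M N n Y b')
      (fun _ _ h => ⟨h.1, h.2.of_succ⟩) fun n => (hXb (n + 1)).2.2.1 R b' hb'
    exact ⟨Y, (hY 0).1, fun n => (hY n).2⟩

end HornNablaSim

theorem hornALCNabla_ef_game_general {Con Rol : Type} [Fintype Con] [Fintype Rol]
    {D1 D2 : Type}
    (M : Str Con Rol D1) (N : Str Con Rol D2) (a : D1) (b : D2) :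
    (∀ ℓ : ℕ, leHornNablaDepth M N ℓ a b ↔ HornNablaSimL M N ℓ {a} b) ∧
    (Finite D1 → Finite D2 → (leHornNabla M N a b ↔ HornNablaSim M N {a} b)) := by
  refine ⟨fun ℓ => leHornNablaDepth_iff_hornNablaSimL, fun _ _ => ?_⟩
  calc leHornNabla M N a b ↔ ∀ ℓ, leHornNablaDepth M N ℓ a b :=
        ⟨fun h _ C hC _ => h C hC, fun h C hC => h C.depth C hC le_rfl⟩
    _ ↔ ∀ ℓ, HornNablaSimL M N ℓ {a} b :=
        forall_congr' fun _ => leHornNablaDepth_iff_hornNablaSimL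
    _ ↔ HornNablaSim M N {a} b :=
        ⟨HornNablaSim.of_forall_hornNablaSimL, HornNablaSim.hornNablaSimL⟩

/-- **Ehrenfeucht–Fraïssé game for hornALC_∇.**
For any finite vocabulary τ, pointed τ-structures `𝔄,a` and `𝔅,b`, and any `ℓ < ω`:
`𝔄,a ≤^ℓ_{hornALC_∇} 𝔅,b` iff `𝔄,{a} ⪯^ℓ_{horn_∇} 𝔅,b`.  If `𝔄` and `𝔅` are finite,
then `𝔄,a ≤_{hornALC_∇} 𝔅,b` iff `𝔄,{a} ⪯_{horn_∇} 𝔅,b`. -/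
theorem hornALCNabla_ef_game {Con Rol : Type} [Fintype Con] [Fintype Rol]
    {D1 D2 : Type} [Nonempty D1] [Nonempty D2]
    (M : Str Con Rol D1) (N : Str Con Rol D2) (a : D1) (b : D2) :
    (∀ ℓ : ℕ, leHornNablaDepth M N ℓ a b ↔ HornNablaSimL M N ℓ {a} b) ∧
    (Finite D1 → Finite D2 → (leHornNabla M N a b ↔ HornNablaSim M N {a} b)) :=
  hornALCNabla_ef_game_general M N a b
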